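/- arXiv:1912.11787 — 2 statements merged into one kernel-verified Lean document; each statement's English description precedes it below -/
import Mathlib

section
/- Let h(z) = Σ bₙzⁿ be analytic in the unit disk and continuous on the closed disk, with sup norm ‖h‖_∞ = sup_{|z|≤1} |h(z)|, and suppose Σ |bₙ| rⁿ ≤ ‖h‖_∞ holds via Bohr's theorem. Then for every Schwarz function φ and every 0 ≤ r ≤ 1/3, M_r(h ∘ φ) ≤ ‖h‖_∞. -/
/-!
Since `φ` maps the disk into the closed disk, `h ∘ φ = Σ aₙ zⁿ` is bounded by `‖h‖_∞`, so the
claim is Bohr's inequality for `h ∘ φ`. After normalising, let `g = Σ aₙ zⁿ` be bounded by `1`.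
For `n ≥ 1` the multisection `G(w) = Σₖ a_{nk} wᵏ` is the average of `g` over the `n` rotations
of an `n`-th root of `w`, hence again bounded by `1`, and Schwarz–Pick at the origin for `G`
gives Wiener's bound `|aₙ| = |G'(0)| ≤ 1 - |G(0)|² = 1 - |a₀|²`. Therefore
`Σ |aₙ| rⁿ ≤ |a₀| + (1 - |a₀|²) r / (1 - r) ≤ |a₀| + (1 - |a₀|²) / 2 ≤ 1` when `r ≤ 1/3`.
-/

open Metric Set Finset ComplexConjugate

section

variable {g : ℂ → ℂ} {a : ℕ → ℂ}

theorem summable_norm_coeff_mul_pow_of_hasSum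
    (hg : ∀ z : ℂ, ‖z‖ < 1 → HasSum (fun n => a n * z ^ n) (g z)) {r : ℝ} (hr0 : 0 ≤ r)
    (hr1 : r < 1) : Summable fun n => ‖a n‖ * r ^ n := by
  have hr : ‖(r : ℂ)‖ < 1 := by rwa [Complex.norm_real, Real.norm_of_nonneg hr0]
  simpa [norm_mul, norm_pow, Complex.norm_real, abs_of_nonneg hr0] using
    (hg r hr).summable.norm

theorem hasFPowerSeriesOnBall_ofScalars_of_hasSum
    (hg : ∀ z : ℂ, ‖z‖ < 1 → HasSum (fun n => a n * z ^ n) (g z)) :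
    HasFPowerSeriesOnBall g (.ofScalars ℂ a) 0 1 where
  r_le := by
    refine ENNReal.le_of_forall_nnreal_lt fun ρ hρ => ?_
    apply FormalMultilinearSeries.le_radius_of_summable
    simpa [FormalMultilinearSeries.ofScalars_norm] using
      summable_norm_coeff_mul_pow_of_hasSum hg ρ.coe_nonneg (mod_cast hρ)
  r_pos := one_pos
  hasSum {y} hy := by
    rw [← ENNReal.coe_one, Metric.eball_coe, NNReal.coe_one, mem_ball_zero_iff] at hy
    simpa [FormalMultilinearSeries.ofScalars_apply_eq, mul_comm] using hg y hy

theorem apply_zero_eq_coeff_zero_of_hasSum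
    (hg : ∀ z : ℂ, ‖z‖ < 1 → HasSum (fun n => a n * z ^ n) (g z)) : g 0 = a 0 := by
  simpa using ((hasFPowerSeriesOnBall_ofScalars_of_hasSum hg).hasFPowerSeriesAt.coeff_zero ![]).symm

theorem deriv_zero_eq_coeff_one_of_hasSum
    (hg : ∀ z : ℂ, ‖z‖ < 1 → HasSum (fun n => a n * z ^ n) (g z)) : deriv g 0 = a 1 := by
  simp [(hasFPowerSeriesOnBall_ofScalars_of_hasSum hg).hasFPowerSeriesAt.deriv]

theorem IsPrimitiveRoot.sum_pow_mul_eq_ite {K : Type*} [Field K] {ζ : K} {n : ℕ}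
    (hζ : IsPrimitiveRoot ζ n) (m : ℕ) :
    ∑ j ∈ range n, ζ ^ (j * m) = if n ∣ m then (n : K) else 0 := by
  simp_rw [mul_comm _ m, pow_mul]
  split_ifs with hdvd
  · simp [(hζ.pow_eq_one_iff_dvd m).mpr hdvd]
  · have hne : ζ ^ m ≠ 1 := mt (hζ.pow_eq_one_iff_dvd m).mp hdvd
    rw [geom_sum_eq hne, ← pow_mul, mul_comm, pow_mul, hζ.pow_eq_one, one_pow, sub_self,
      zero_div]

theorem hasSum_coeff_mul_pow_mul_of_hasSum_rotations {s : ℕ → ℂ} {ζ z : ℂ}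
    {n : ℕ} (hζ : IsPrimitiveRoot ζ n) (hn : n ≠ 0)
    (hs : ∀ j, HasSum (fun m => a m * (ζ ^ j * z) ^ m) (s j)) :
    HasSum (fun k => a (n * k) * (z ^ n) ^ k) ((n : ℂ)⁻¹ * ∑ j ∈ range n, s j) := by
  have hsum : HasSum (fun m => (∑ j ∈ range n, ζ ^ (j * m)) * (a m * z ^ m))
      (∑ j ∈ range n, s j) := by
    convert hasSum_sum fun j _ => hs j using 2 with m
    rw [Finset.sum_mul]
    refine Finset.sum_congr rfl fun j _ => ?_
    ring
  have hsupp : ∀ m ∉ Set.range (n * ·), (∑ j ∈ range n, ζ ^ (j * m)) * (a m * z ^ m) = 0 := by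
    intro m hm
    rw [hζ.sum_pow_mul_eq_ite, if_neg fun ⟨k, hk⟩ => hm ⟨k, hk.symm⟩, zero_mul]
  have hmul : HasSum (fun k => (n : ℂ) * (a (n * k) * (z ^ n) ^ k)) (∑ j ∈ range n, s j) := by
    convert ((mul_right_injective₀ hn).hasSum_iff hsupp).mpr hsum using 2 with k
    rw [Function.comp_apply, hζ.sum_pow_mul_eq_ite, if_pos (dvd_mul_right n k), pow_mul]
  simpa [← mul_assoc, hn] using hmul.mul_left (n : ℂ)⁻¹

theorem exists_hasSum_coeff_mul_pow_mul_norm_le {M : ℝ}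
    (hg : ∀ z : ℂ, ‖z‖ < 1 → HasSum (fun n => a n * z ^ n) (g z))
    (hb : ∀ z : ℂ, ‖z‖ < 1 → ‖g z‖ ≤ M) {n : ℕ} (hn : n ≠ 0) {w : ℂ} (hw : ‖w‖ < 1) :
    ∃ s, HasSum (fun k => a (n * k) * w ^ k) s ∧ ‖s‖ ≤ M := by
  obtain ⟨z, rfl⟩ := IsAlgClosed.exists_pow_nat_eq w (Nat.pos_of_ne_zero hn)
  obtain ⟨ζ, hζ⟩ : ∃ ζ : ℂ, IsPrimitiveRoot ζ n := ⟨_, Complex.isPrimitiveRoot_exp n hn⟩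
  have hrot (j : ℕ) : ‖ζ ^ j * z‖ < 1 := by
    rwa [norm_mul, norm_pow, hζ.norm'_eq_one hn, one_pow, one_mul, ← pow_lt_one_iff_of_nonneg
      (norm_nonneg z) hn, ← norm_pow]
  refine ⟨_, hasSum_coeff_mul_pow_mul_of_hasSum_rotations hζ hn fun j => hg _ (hrot j), ?_⟩
  have hnpos : (0 : ℝ) < n := by positivity
  calc ‖(n : ℂ)⁻¹ * ∑ j ∈ range n, g (ζ ^ j * z)‖
      ≤ (n : ℝ)⁻¹ * ∑ _j ∈ range n, M := by
        rw [norm_mul, norm_inv, Complex.norm_natCast]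
        gcongr
        exact (norm_sum_le _ _).trans (Finset.sum_le_sum fun j _ => hb _ (hrot j))
    _ = M := by rw [sum_const, card_range, nsmul_eq_mul, inv_mul_cancel_left₀ hnpos.ne']

theorem sq_norm_one_sub_conj_mul_sub_sq_norm_sub (α β : ℂ) :
    ‖1 - conj α * β‖ ^ 2 - ‖β - α‖ ^ 2 = (1 - ‖α‖ ^ 2) * (1 - ‖β‖ ^ 2) := by
  simp only [Complex.sq_norm, Complex.normSq_apply, Complex.sub_re, Complex.sub_im,
    Complex.mul_re, Complex.mul_im, Complex.one_re, Complex.one_im, Complex.conj_re,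
    Complex.conj_im]
  ring

theorem one_sub_conj_mul_ne_zero {α β : ℂ} (hα : ‖α‖ < 1) (hβ : ‖β‖ ≤ 1) :
    1 - conj α * β ≠ 0 := by
  refine sub_ne_zero.mpr fun h => ?_
  have : ‖conj α * β‖ < 1 := by
    rw [norm_mul, Complex.norm_conj]
    exact mul_lt_one_of_nonneg_of_lt_one_left (norm_nonneg α) hα hβ
  simp [← h] at this

theorem norm_sub_div_one_sub_conj_mul_lt_one {α β : ℂ} (hα : ‖α‖ < 1) (hβ : ‖β‖ < 1) :
    ‖(β - α) / (1 - conj α * β)‖ < 1 := by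
  have hden := norm_pos_iff.mpr (one_sub_conj_mul_ne_zero hα hβ.le)
  rw [norm_div, div_lt_one hden, ← sq_lt_sq₀ (norm_nonneg _) hden.le, ← sub_pos,
    sq_norm_one_sub_conj_mul_sub_sq_norm_sub]
  have hα' : ‖α‖ ^ 2 < 1 := pow_lt_one₀ (norm_nonneg α) hα two_ne_zero
  have hβ' : ‖β‖ ^ 2 < 1 := pow_lt_one₀ (norm_nonneg β) hβ two_ne_zero
  exact mul_pos (sub_pos.mpr hα') (sub_pos.mpr hβ')

theorem norm_deriv_zero_le_one_sub_sq_of_norm_lt_one {G : ℂ → ℂ}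
    (hd : DifferentiableOn ℂ G (ball 0 1)) (hb : ∀ w ∈ ball (0 : ℂ) 1, ‖G w‖ < 1) :
    ‖deriv G 0‖ ≤ 1 - ‖G 0‖ ^ 2 := by
  have h0 : (0 : ℂ) ∈ ball (0 : ℂ) 1 := mem_ball_self one_pos
  set α := G 0
  have hα : ‖α‖ < 1 := hb 0 h0
  have hden (w : ℂ) (hw : w ∈ ball (0 : ℂ) 1) : 1 - conj α * G w ≠ 0 :=
    one_sub_conj_mul_ne_zero hα (hb w hw).le
  set F := fun w => (G w - α) / (1 - conj α * G w)
  have hdF : DifferentiableOn ℂ F (ball 0 1) :=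
    (hd.sub_const α).div ((differentiableOn_const 1).sub ((differentiableOn_const _).mul hd)) hden
  have hmaps : MapsTo F (ball 0 1) (closedBall (F 0) 1) := fun w hw => by
    simpa [F, α] using (norm_sub_div_one_sub_conj_mul_lt_one hα (hb w hw)).le
  have hG' : HasDerivAt G (deriv G 0) 0 :=
    (hd.differentiableAt (isOpen_ball.mem_nhds h0)).hasDerivAt
  have hpos : 0 < 1 - ‖α‖ ^ 2 := sub_pos.mpr (pow_lt_one₀ (norm_nonneg α) hα two_ne_zero)
  have hF' : deriv F 0 = deriv G 0 / ((1 - ‖α‖ ^ 2 : ℝ) : ℂ) := by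
    have hne : ((1 - ‖α‖ ^ 2 : ℝ) : ℂ) ≠ 0 := mod_cast hpos.ne'
    have hF : HasDerivAt F _ 0 :=
      (hG'.sub_const α).div ((hasDerivAt_const 0 1).sub (hG'.const_mul (conj α))) (hden 0 h0)
    have hα0 : G 0 - α = 0 := sub_self α
    rw [hF.deriv, hα0, zero_mul, sub_zero, Complex.conj_mul']
    push_cast
    field_simp
  have := Complex.norm_deriv_le_div_of_mapsTo_ball hdF hmaps one_pos
  rwa [hF', norm_div, Complex.norm_real, Real.norm_of_nonneg hpos.le, div_one,
    div_le_one hpos] at this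

theorem norm_deriv_zero_le_one_sub_sq {G : ℂ → ℂ} (hd : DifferentiableOn ℂ G (ball 0 1))
    (hb : ∀ w ∈ ball (0 : ℂ) 1, ‖G w‖ ≤ 1) : ‖deriv G 0‖ ≤ 1 - ‖G 0‖ ^ 2 := by
  by_cases hmax : ∃ w ∈ ball (0 : ℂ) 1, ‖G w‖ = 1
  · obtain ⟨w, hw, hGw⟩ := hmax
    have hconst : EqOn G (fun _ => G w) (ball 0 1) :=
      Complex.eqOn_of_isPreconnected_of_isMaxOn_norm (convex_ball _ _).isPreconnected
        isOpen_ball hd hw fun z hz => (hb z hz).trans hGw.ge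
    have h0 : (0 : ℂ) ∈ ball (0 : ℂ) 1 := mem_ball_self one_pos
    rw [(hconst.eventuallyEq_of_mem (isOpen_ball.mem_nhds h0)).deriv_eq, hconst h0]
    simp [hGw]
  · push Not at hmax
    exact norm_deriv_zero_le_one_sub_sq_of_norm_lt_one hd fun w hw =>
      (hb w hw).lt_of_ne (hmax w hw)

theorem norm_coeff_le_one_sub_sq
    (hg : ∀ z : ℂ, ‖z‖ < 1 → HasSum (fun n => a n * z ^ n) (g z))
    (hb : ∀ z : ℂ, ‖z‖ < 1 → ‖g z‖ ≤ 1) {n : ℕ} (hn : n ≠ 0) : ‖a n‖ ≤ 1 - ‖a 0‖ ^ 2 := by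
  have hG (w : ℂ) (hw : ‖w‖ < 1) :
      HasSum (fun k => a (n * k) * w ^ k) (∑' k, a (n * k) * w ^ k) ∧
        ‖∑' k, a (n * k) * w ^ k‖ ≤ 1 := by
    obtain ⟨s, hs, hsb⟩ := exists_hasSum_coeff_mul_pow_mul_norm_le hg hb hn hw
    exact ⟨hs.summable.hasSum, hs.tsum_eq ▸ hsb⟩
  have hGsum := fun w hw => (hG w hw).1
  have hd := (hasFPowerSeriesOnBall_ofScalars_of_hasSum hGsum).differentiableOn
  rw [← ENNReal.ofReal_one, Metric.eball_ofReal] at hd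
  simpa [deriv_zero_eq_coeff_one_of_hasSum hGsum, apply_zero_eq_coeff_zero_of_hasSum hGsum]
    using norm_deriv_zero_le_one_sub_sq hd fun w hw => (hG w (mem_ball_zero_iff.mp hw)).2

theorem tsum_norm_coeff_mul_pow_le_one
    (hg : ∀ z : ℂ, ‖z‖ < 1 → HasSum (fun n => a n * z ^ n) (g z))
    (hb : ∀ z : ℂ, ‖z‖ < 1 → ‖g z‖ ≤ 1) {r : ℝ} (hr0 : 0 ≤ r) (hr : r ≤ 1 / 3) :
    ∑' n, ‖a n‖ * r ^ n ≤ 1 := by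
  set x := ‖a 0‖
  have hx : x ≤ 1 := by simpa [x, apply_zero_eq_coeff_zero_of_hasSum hg] using hb 0 (by simp)
  have hx2 : 0 ≤ 1 - x ^ 2 := by nlinarith [norm_nonneg (a 0)]
  have hr1 : r < 1 := by linarith
  have hsum := summable_norm_coeff_mul_pow_of_hasSum hg hr0 hr1
  have hgeom := summable_geometric_of_lt_one hr0 hr1
  have htail (n : ℕ) : ‖a (n + 1)‖ * r ^ (n + 1) ≤ (1 - x ^ 2) * r * r ^ n := by
    rw [pow_succ', mul_assoc]
    exact mul_le_mul_of_nonneg_right (norm_coeff_le_one_sub_sq hg hb n.succ_ne_zero)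
      (by positivity)
  have hratio : r / (1 - r) ≤ 1 / 2 := by
    rw [div_le_div_iff₀ (by linarith) two_pos]
    linarith
  calc ∑' n, ‖a n‖ * r ^ n = x + ∑' n, ‖a (n + 1)‖ * r ^ (n + 1) := by
        rw [hsum.tsum_eq_zero_add, pow_zero, mul_one]
    _ ≤ x + ∑' n, (1 - x ^ 2) * r * r ^ n := by
        refine add_le_add_right (Summable.tsum_le_tsum htail ?_ (hgeom.mul_left _)) x
        exact (summable_nat_add_iff 1).mpr hsum
    _ = x + (1 - x ^ 2) * (r / (1 - r)) := by
        rw [tsum_mul_left, tsum_geometric_of_lt_one hr0 hr1]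
        ring
    _ ≤ x + (1 - x ^ 2) * (1 / 2) := by gcongr
    _ ≤ 1 := by nlinarith [sq_nonneg (1 - x)]

theorem tsum_norm_coeff_mul_pow_le {M : ℝ}
    (hg : ∀ z : ℂ, ‖z‖ < 1 → HasSum (fun n => a n * z ^ n) (g z))
    (hb : ∀ z : ℂ, ‖z‖ < 1 → ‖g z‖ ≤ M) {r : ℝ} (hr0 : 0 ≤ r) (hr : r ≤ 1 / 3) :
    ∑' n, ‖a n‖ * r ^ n ≤ M := by
  -- scaling by every `M' > M` rather than by `M` itself covers the case `M = 0`
  refine le_of_forall_gt_imp_ge_of_dense fun M' hM' => ?_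
  have hM'pos : 0 < M' := (norm_nonneg _).trans_lt ((hb 0 (by simp)).trans_lt hM')
  have hnorm (u : ℂ) : ‖u / M'‖ = ‖u‖ / M' := by
    rw [norm_div, Complex.norm_real, Real.norm_of_nonneg hM'pos.le]
  have hscaled := tsum_norm_coeff_mul_pow_le_one (g := fun z => g z / M')
    (a := fun n => a n / M') (fun z hz => by simpa [div_mul_eq_mul_div] using (hg z hz).div_const _)
    (fun z hz => by rw [hnorm, div_le_one hM'pos]; exact (hb z hz).trans hM'.le) hr0 hr
  simp_rw [hnorm, div_mul_eq_mul_div, tsum_div_const] at hscaled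
  rwa [div_le_one hM'pos] at hscaled

end

theorem von_neumann_schwarz_general (h φ : ℂ → ℂ) (a : ℕ → ℂ) (C : ℝ)
    (hcont : ContinuousOn h (Metric.closedBall (0 : ℂ) 1))
    (hC : C = ⨆ z : Metric.closedBall (0 : ℂ) 1, ‖h z‖)
    (r : ℝ) (hr0 : 0 ≤ r) (hr : r ≤ 1 / 3)
    (hφb : ∀ z : ℂ, ‖z‖ < 1 → ‖φ z‖ ≤ 1)
    (hcomp : ∀ z : ℂ, ‖z‖ < 1 → HasSum (fun n => a n * z ^ n) (h (φ z))) :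
    ∑' n : ℕ, ‖a n‖ * r ^ n ≤ C := by
  have hbdd : BddAbove (range fun z : closedBall (0 : ℂ) 1 => ‖h z‖) := by
    rw [← image_eq_range (fun w => ‖h w‖)]
    exact ((isCompact_closedBall 0 1).image_of_continuousOn hcont.norm).bddAbove
  refine tsum_norm_coeff_mul_pow_le hcomp (fun z hz => ?_) hr0 hr
  rw [hC]
  exact le_ciSup hbdd ⟨φ z, mem_closedBall_zero_iff.mpr (hφb z hz)⟩

/-- Von Neumann–type inequality: if `h` is analytic on the disk, continuous on the
closed disk with sup norm `C`, whose majorant satisfies Bohr's inequality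
`Σ |bₙ| rⁿ ≤ C`, then `M_r(h ∘ φ) ≤ C` for every Schwarz function `φ` and `0 ≤ r ≤ 1/3`. -/
theorem von_neumann_schwarz (h φ : ℂ → ℂ) (a b : ℕ → ℂ) (C : ℝ)
    (hh : ∀ z : ℂ, ‖z‖ < 1 → HasSum (fun n => b n * z ^ n) (h z))
    (hcont : ContinuousOn h (Metric.closedBall (0 : ℂ) 1))
    (hC : C = ⨆ z : Metric.closedBall (0 : ℂ) 1, ‖h z‖)
    (r : ℝ) (hr0 : 0 ≤ r) (hr : r ≤ 1 / 3)
    (hBohr : ∑' n : ℕ, ‖b n‖ * r ^ n ≤ C)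
    (hφ0 : φ 0 = 0)
    (hφb : ∀ z : ℂ, ‖z‖ < 1 → ‖φ z‖ ≤ 1)
    (hφa : AnalyticOnNhd ℂ φ (Metric.ball (0 : ℂ) 1))
    (hcomp : ∀ z : ℂ, ‖z‖ < 1 → HasSum (fun n => a n * z ^ n) (h (φ z))) :
    ∑' n : ℕ, ‖a n‖ * r ^ n ≤ C :=
  von_neumann_schwarz_general h φ a C hcont hC r hr0 hr hφb hcomp
end

section
/- If φ is a Schwarz function and j ≥ 1, then for every k ≥ 0 and every z with |z| ≤ 1/2, the k-th section of φ^j satisfies |s_k(z; φ^j)| ≤ |z|^j. -/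
/-!
Rogosinski: if `g = ∑ bₘ wᵐ` is bounded by `M` on the unit disc, then `|∑_{m ≤ N} bₘ zᵐ| ≤ M`
for `|z| ≤ 1/2`. For `0 < r < 1`, integrating `g (r e^{iθ})` against
`K(θ) = 2 Re ∑_{m ≤ N} (z e^{-iθ})ᵐ - 1 = ∑_{m ≤ N} (z e^{-iθ})ᵐ + ∑_{1 ≤ m ≤ N} (z̄ e^{iθ})ᵐ`
picks out `2π ∑_{m ≤ N} bₘ (r z)ᵐ`; the kernel is nonnegative for `|z| ≤ 1/2` and has integral
`2π`, so this section is bounded by `M`, and we let `r → 1`.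

By the Schwarz lemma `|φʲ(w)| ≤ |w|ʲ`, so the Cauchy estimates `|cₙ| rⁿ ≤ rʲ` kill the first `j`
coefficients of `φʲ`. Hence `ψ(w) = ∑ₘ c_{j+m} wᵐ = φ(w)ʲ / wʲ` is bounded by `1`, and the
sections of `φʲ` are `zʲ` times those of `ψ`.
-/

open Complex Real MeasureTheory Finset Metric ComplexConjugate

theorem integral_exp_intCast_mul_I (n : ℤ) :
    ∫ θ in (0 : ℝ)..2 * π, exp (n * θ * I) = if n = 0 then (2 * π : ℂ) else 0 := by
  split_ifs with hn
  · simp [hn]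
  have hnI : (n : ℂ) * I ≠ 0 := by simp [hn, I_ne_zero]
  have hper : exp (n * I * (2 * π : ℝ)) = 1 := by
    rw [← exp_int_mul_two_pi_mul_I n]; push_cast; ring_nf
  simp_rw [show ∀ θ : ℝ, (n : ℂ) * θ * I = n * I * θ from fun θ => by ring]
  rw [integral_exp_mul_complex hnI, hper]
  simp

section PowerSeriesOnUnitDisc

variable {f : ℂ → ℂ} {b : ℕ → ℂ} {r : ℝ}

theorem one_le_radius_ofScalars (hb : ∀ w : ℂ, ‖w‖ < 1 → Summable fun n => b n * w ^ n) :
    1 ≤ (FormalMultilinearSeries.ofScalars ℂ b).radius := by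
  refine ENNReal.le_of_forall_nnreal_lt fun x hx => ?_
  refine FormalMultilinearSeries.le_radius_of_tendsto _ (l := 0) ?_
  simpa [FormalMultilinearSeries.ofScalars_norm] using
    (hb x (by simpa using hx)).tendsto_atTop_zero.norm

theorem summable_norm_mul_pow_of_forall_summable
    (hb : ∀ w : ℂ, ‖w‖ < 1 → Summable fun n => b n * w ^ n) (hr0 : 0 ≤ r) (hr1 : r < 1) :
    Summable fun n => ‖b n‖ * r ^ n := by
  lift r to NNReal using hr0
  simpa [FormalMultilinearSeries.ofScalars_norm] using
    (FormalMultilinearSeries.ofScalars ℂ b).summable_norm_mul_pow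
      ((show (r : ENNReal) < 1 by exact_mod_cast hr1).trans_le (one_le_radius_ofScalars hb))

theorem continuousOn_ball_of_forall_hasSum
    (hf : ∀ w : ℂ, ‖w‖ < 1 → HasSum (fun n => b n * w ^ n) (f w)) :
    ContinuousOn f (ball 0 1) := by
  set p := FormalMultilinearSeries.ofScalars ℂ b
  have hradius := one_le_radius_ofScalars fun w hw => (hf w hw).summable
  have hp := p.hasFPowerSeriesOnBall (zero_lt_one.trans_le hradius)
  have hball : ball (0 : ℂ) 1 ⊆ eball 0 p.radius := by
    simpa [← ENNReal.coe_one, eball_coe] using eball_subset_eball (x := (0 : ℂ)) hradius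
  refine (hp.continuousOn.mono hball).congr fun w hw => ?_
  have hsum := hp.hasSum (hball hw)
  simp only [p, FormalMultilinearSeries.ofScalars_apply_eq, smul_eq_mul, zero_add] at hsum
  exact (hf w (mem_ball_zero_iff.1 hw)).unique hsum

theorem hasSum_integral_comp_circleMap_mul_exp
    (hf : ∀ w : ℂ, ‖w‖ < 1 → HasSum (fun n => b n * w ^ n) (f w)) (hr0 : 0 ≤ r) (hr1 : r < 1)
    (k : ℤ) :
    HasSum (fun n : ℕ => b n * r ^ n * if (n : ℤ) + k = 0 then (2 * π : ℂ) else 0)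
      (∫ θ in (0 : ℝ)..2 * π, f (circleMap 0 r θ) * exp (k * θ * I)) := by
  have hmem : ∀ θ, ‖circleMap 0 r θ‖ < 1 := by simp [abs_of_nonneg hr0, hr1]
  have hterm : ∀ (n : ℕ) (θ : ℝ), b n * circleMap 0 r θ ^ n * exp (k * θ * I) =
      b n * r ^ n * exp ((n + k : ℤ) * θ * I) := by
    intro n θ
    rw [circleMap_zero_pow, circleMap_zero, mul_assoc, mul_assoc, ← Complex.exp_add]
    push_cast
    ring_nf
  have hsum := intervalIntegral.hasSum_integral_of_dominated_convergence
    (F := fun n θ => b n * circleMap 0 r θ ^ n * exp (k * θ * I)) (μ := volume)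
    (a := 0) (b := 2 * π)
    (fun n _ => ‖b n‖ * r ^ n)
    (fun n => by fun_prop)
    (fun n => Filter.Eventually.of_forall fun θ _ => by
      simp [Complex.norm_exp, abs_of_nonneg hr0])
    (Filter.Eventually.of_forall fun _ _ => summable_norm_mul_pow_of_forall_summable
      (fun w hw => (hf w hw).summable) hr0 hr1)
    intervalIntegrable_const
    (Filter.Eventually.of_forall fun θ _ => (hf _ (hmem θ)).mul_right _)
  simpa only [hterm, intervalIntegral.integral_const_mul, integral_exp_intCast_mul_I] using hsum

theorem integral_comp_circleMap_mul_pow_exp_neg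
    (hf : ∀ w : ℂ, ‖w‖ < 1 → HasSum (fun n => b n * w ^ n) (f w)) (hr0 : 0 ≤ r) (hr1 : r < 1)
    (w : ℂ) (m : ℕ) :
    ∫ θ in (0 : ℝ)..2 * π, f (circleMap 0 r θ) * (w * exp (-(θ * I))) ^ m =
      2 * π * b m * (r * w) ^ m := by
  have hpow : ∀ θ : ℝ, f (circleMap 0 r θ) * (w * exp (-(θ * I))) ^ m =
      w ^ m * (f (circleMap 0 r θ) * exp ((-m : ℤ) * θ * I)) := by
    intro θ
    rw [mul_pow, ← Complex.exp_nat_mul]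
    push_cast
    ring_nf
  simp_rw [hpow, intervalIntegral.integral_const_mul]
  rw [(hasSum_integral_comp_circleMap_mul_exp hf hr0 hr1 (-m)).unique
    (hasSum_single m fun n hn => by rw [if_neg (by omega), mul_zero])]
  simp only [add_neg_cancel, if_true]
  ring

theorem integral_comp_circleMap_mul_pow_exp_succ
    (hf : ∀ w : ℂ, ‖w‖ < 1 → HasSum (fun n => b n * w ^ n) (f w)) (hr0 : 0 ≤ r) (hr1 : r < 1)
    (w : ℂ) (m : ℕ) :
    ∫ θ in (0 : ℝ)..2 * π, f (circleMap 0 r θ) * (w * exp (θ * I)) ^ (m + 1) = 0 := by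
  have hpow : ∀ θ : ℝ, f (circleMap 0 r θ) * (w * exp (θ * I)) ^ (m + 1) =
      w ^ (m + 1) * (f (circleMap 0 r θ) * exp ((m + 1 : ℤ) * θ * I)) := by
    intro θ
    rw [mul_pow, ← Complex.exp_nat_mul]
    push_cast
    ring_nf
  simp_rw [hpow, intervalIntegral.integral_const_mul]
  rw [(hasSum_integral_comp_circleMap_mul_exp hf hr0 hr1 (m + 1)).unique
    (hasSum_zero.congr_fun fun n => by rw [if_neg (by omega), mul_zero]), mul_zero]

def rogosinskiKernel (N : ℕ) (u : ℂ) : ℝ := 2 * (∑ m ∈ range (N + 1), u ^ m).re - 1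

theorem continuous_rogosinskiKernel (N : ℕ) : Continuous (rogosinskiKernel N) := by
  unfold rogosinskiKernel
  fun_prop

theorem ofReal_rogosinskiKernel (N : ℕ) (u : ℂ) :
    (rogosinskiKernel N u : ℂ) = ∑ m ∈ range (N + 1), u ^ m + ∑ m ∈ range N, conj u ^ (m + 1) := by
  have hconj : conj (∑ m ∈ range (N + 1), u ^ m) = ∑ m ∈ range N, conj u ^ (m + 1) + 1 := by
    simp [map_sum, sum_range_succ']
  rw [rogosinskiKernel]
  push_cast
  rw [re_eq_add_conj, hconj]
  ring

theorem rogosinskiKernel_nonneg {u : ℂ} (hu : ‖u‖ ≤ 1 / 2) (N : ℕ) :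
    0 ≤ rogosinskiKernel N u := by
  rcases N with _ | N
  · norm_num [rogosinskiKernel]
  have hq : 0 < normSq (1 - u) := normSq_pos.2 fun h => by
    rw [← sub_eq_zero.1 h] at hu
    norm_num at hu
  set S := ∑ m ∈ range (N + 2), u ^ m
  set t := ‖u‖
  have ht : 0 ≤ t := norm_nonneg u
  have hmul : (2 * S - 1) * ((1 - u) * conj (1 - u)) =
      1 - u * conj u + (u - conj u) - 2 * (u ^ (N + 2) * (1 - conj u)) := by
    rw [map_sub, map_one]
    linear_combination (-2 * (1 - conj u)) * geom_sum_mul u (N + 2)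
  have hre : (2 * S.re - 1) * normSq (1 - u) =
      1 - normSq u - 2 * (u ^ (N + 2) * (1 - conj u)).re := by
    have := congrArg Complex.re hmul
    rw [mul_conj, mul_conj, sub_conj] at this
    simpa using this
  have htail : (u ^ (N + 2) * (1 - conj u)).re ≤ t ^ 2 * (1 + t) := calc
    _ ≤ ‖u ^ (N + 2) * (1 - conj u)‖ := re_le_norm _
    _ ≤ t ^ (N + 2) * (1 + t) := by
      rw [norm_mul, norm_pow]
      gcongr
      exact (norm_sub_le _ _).trans (by simp [t])
    _ ≤ t ^ 2 * (1 + t) :=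
      mul_le_mul_of_nonneg_right (pow_le_pow_of_le_one ht (by linarith) (by omega)) (by linarith)
  -- `1 - t² - 2t²(1 + t) = (1 - 2t)(1 + t)²`: this is where `‖u‖ ≤ 1/2` is needed.
  have hfactor : 0 ≤ (1 - 2 * t) * (1 + t) ^ 2 := by
    have : 0 ≤ 1 - 2 * t := by linarith
    positivity
  refine nonneg_of_mul_nonneg_left ?_ hq
  rw [rogosinskiKernel, hre, normSq_eq_norm_sq]
  nlinarith

theorem integral_comp_circleMap_mul_rogosinskiKernel
    (hf : ∀ w : ℂ, ‖w‖ < 1 → HasSum (fun n => b n * w ^ n) (f w)) (hr0 : 0 ≤ r) (hr1 : r < 1)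
    (N : ℕ) (z : ℂ) :
    ∫ θ in (0 : ℝ)..2 * π, f (circleMap 0 r θ) * rogosinskiKernel N (z * exp (-(θ * I))) =
      2 * π * ∑ m ∈ range (N + 1), b m * (r * z) ^ m := by
  have hconj : ∀ θ : ℝ, conj (z * exp (-(θ * I))) = conj z * exp (θ * I) := fun θ => by
    rw [map_mul, ← exp_conj]
    simp
  have hcont : Continuous fun θ => f (circleMap 0 r θ) :=
    (continuousOn_ball_of_forall_hasSum hf).comp_continuous (continuous_circleMap 0 r)
      fun θ => by simp [abs_of_nonneg hr0, hr1]
  simp_rw [ofReal_rogosinskiKernel, hconj, mul_add, mul_sum]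
  rw [intervalIntegral.integral_add, intervalIntegral.integral_finsetSum,
    intervalIntegral.integral_finsetSum]
  · simp [integral_comp_circleMap_mul_pow_exp_neg hf hr0 hr1,
      integral_comp_circleMap_mul_pow_exp_succ hf hr0 hr1, mul_assoc]
  all_goals first
    | exact fun _ _ => (hcont.mul (by fun_prop)).intervalIntegrable _ _
    | exact (continuous_finsetSum _ fun _ _ => hcont.mul (by fun_prop)).intervalIntegrable _ _

theorem integral_rogosinskiKernel (N : ℕ) (z : ℂ) :
    ∫ θ in (0 : ℝ)..2 * π, rogosinskiKernel N (z * exp (-(θ * I))) = 2 * π := by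
  have hone (w : ℂ) : HasSum (fun n => (if n = 0 then 1 else 0) * w ^ n) 1 := by
    convert hasSum_ite_eq 0 (1 : ℂ) using 2 with n
    split_ifs <;> simp_all
  have h := integral_comp_circleMap_mul_rogosinskiKernel (f := fun _ => 1) (fun w _ => hone w)
    le_rfl zero_lt_one N z
  simp only [one_mul, ofReal_zero, zero_mul, ite_mul, sum_ite_eq', mem_range,
    Order.lt_add_one_iff, zero_le, ↓reduceIte, pow_zero, mul_one] at h
  rw [intervalIntegral.integral_ofReal] at h
  exact_mod_cast h

theorem norm_sum_range_mul_pow_le_of_norm_comp_circleMap_le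
    (hf : ∀ w : ℂ, ‖w‖ < 1 → HasSum (fun n => b n * w ^ n) (f w)) (hr0 : 0 ≤ r) (hr1 : r < 1)
    {M : ℝ} (hM : ∀ θ : ℝ, ‖f (circleMap 0 r θ)‖ ≤ M) (N : ℕ) {z : ℂ} (hz : ‖z‖ ≤ 1 / 2) :
    ‖∑ m ∈ range (N + 1), b m * (r * z) ^ m‖ ≤ M := by
  set K : ℝ → ℝ := fun θ => rogosinskiKernel N (z * exp (-(θ * I)))
  have hK : ∀ θ, 0 ≤ K θ := fun θ =>
    rogosinskiKernel_nonneg (by simpa [Complex.norm_exp] using hz) N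
  have hKcont : Continuous K := (continuous_rogosinskiKernel N).comp (by fun_prop)
  have h2π : (0 : ℝ) < 2 * π := by positivity
  refine le_of_mul_le_mul_left ?_ h2π
  calc 2 * π * ‖∑ m ∈ range (N + 1), b m * (r * z) ^ m‖
      = ‖∫ θ in (0 : ℝ)..2 * π, f (circleMap 0 r θ) * K θ‖ := by
        rw [integral_comp_circleMap_mul_rogosinskiKernel hf hr0 hr1, norm_mul]
        simp [abs_of_pos pi_pos]
    _ ≤ ∫ θ in (0 : ℝ)..2 * π, M * K θ :=
        intervalIntegral.norm_integral_le_of_norm_le h2π.le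
          (Filter.Eventually.of_forall fun θ _ => by
            rw [norm_mul, norm_real, Real.norm_of_nonneg (hK θ)]
            exact mul_le_mul_of_nonneg_right (hM θ) (hK θ))
          ((continuous_const.mul hKcont).intervalIntegrable _ _)
    _ = 2 * π * M := by
        rw [intervalIntegral.integral_const_mul, integral_rogosinskiKernel, mul_comm]

theorem norm_sum_range_mul_pow_le
    (hf : ∀ w : ℂ, ‖w‖ < 1 → HasSum (fun n => b n * w ^ n) (f w)) {M : ℝ}
    (hM : ∀ w : ℂ, ‖w‖ < 1 → ‖f w‖ ≤ M) (N : ℕ) {z : ℂ} (hz : ‖z‖ ≤ 1 / 2) :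
    ‖∑ m ∈ range N, b m * z ^ m‖ ≤ M := by
  rcases N with _ | N
  · simpa using (norm_nonneg _).trans (hM 0 (by simp))
  have hcont : Continuous fun r : ℝ => ‖∑ m ∈ range (N + 1), b m * (r * z) ^ m‖ := by fun_prop
  have hlim := (hcont.tendsto 1).mono_left (nhdsWithin_le_nhds (s := Set.Iio 1))
  simp only [ofReal_one, one_mul] at hlim
  refine le_of_tendsto hlim (Filter.mem_of_superset (Ioo_mem_nhdsLT zero_lt_one) fun r hr => ?_)
  exact norm_sum_range_mul_pow_le_of_norm_comp_circleMap_le hf hr.1.le hr.2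
    (fun θ => hM _ (by simp [abs_of_pos hr.1, hr.2])) N hz

theorem norm_coeff_mul_pow_le
    (hf : ∀ w : ℂ, ‖w‖ < 1 → HasSum (fun n => b n * w ^ n) (f w)) (hr0 : 0 ≤ r) (hr1 : r < 1)
    {M : ℝ} (hM : ∀ θ : ℝ, ‖f (circleMap 0 r θ)‖ ≤ M) (n : ℕ) :
    ‖b n‖ * r ^ n ≤ M := by
  have h2π : (0 : ℝ) < 2 * π := by positivity
  have hint := integral_comp_circleMap_mul_pow_exp_neg hf hr0 hr1 1 n
  have hle := intervalIntegral.norm_integral_le_of_norm_le_const (a := 0) (b := 2 * π)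
    (f := fun θ => f (circleMap 0 r θ) * (1 * exp (-(θ * I))) ^ n) (C := M) fun θ _ => by
      simpa [Complex.norm_exp] using hM θ
  rw [hint] at hle
  simp only [norm_mul, norm_pow, norm_real, Real.norm_of_nonneg hr0, Real.norm_of_nonneg pi_pos.le,
    Complex.norm_ofNat, sub_zero, mul_one, abs_of_pos h2π] at hle
  exact le_of_mul_le_mul_left (by linarith) h2π

variable {j : ℕ}

theorem norm_coeff_mul_pow_le_pow
    (hf : ∀ w : ℂ, ‖w‖ < 1 → HasSum (fun n => b n * w ^ n) (f w))
    (hfj : ∀ w : ℂ, ‖w‖ < 1 → ‖f w‖ ≤ ‖w‖ ^ j) (hr0 : 0 ≤ r) (hr1 : r < 1) (n : ℕ) :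
    ‖b n‖ * r ^ n ≤ r ^ j :=
  norm_coeff_mul_pow_le hf hr0 hr1 (fun θ => by
    simpa [abs_of_nonneg hr0] using hfj (circleMap 0 r θ) (by simp [abs_of_nonneg hr0, hr1])) n

theorem coeff_eq_zero_of_norm_le_pow
    (hf : ∀ w : ℂ, ‖w‖ < 1 → HasSum (fun n => b n * w ^ n) (f w))
    (hfj : ∀ w : ℂ, ‖w‖ < 1 → ‖f w‖ ≤ ‖w‖ ^ j) {n : ℕ} (hn : n < j) : b n = 0 := by
  have hle : ∀ r ∈ Set.Ioo (0 : ℝ) 1, ‖b n‖ ≤ r ^ (j - n) := fun r hr => by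
    have h := norm_coeff_mul_pow_le_pow hf hfj hr.1.le hr.2 n
    rw [← Nat.sub_add_cancel hn.le, pow_add] at h
    exact le_of_mul_le_mul_right h (pow_pos hr.1 n)
  have hlim : Filter.Tendsto (fun r : ℝ => r ^ (j - n)) (nhdsWithin 0 (Set.Ioi 0)) (nhds 0) := by
    simpa [zero_pow (Nat.sub_ne_zero_of_lt hn)] using
      ((continuous_pow (M := ℝ) (j - n)).tendsto 0).mono_left nhdsWithin_le_nhds
  exact norm_le_zero_iff.1 (ge_of_tendsto hlim (Filter.mem_of_superset (Ioo_mem_nhdsGT one_pos) hle))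

theorem hasSum_pow_mul_coeff_shift (hb : ∀ n < j, b n = 0) {w a : ℂ}
    (h : HasSum (fun n => b n * w ^ n) a) : HasSum (fun m => w ^ j * (b (j + m) * w ^ m)) a := by
  have h' := (hasSum_nat_add_iff' j).2 h
  rw [sum_eq_zero fun n hn => by rw [hb n (mem_range.1 hn), zero_mul], sub_zero] at h'
  refine h'.congr_fun fun m => ?_
  rw [add_comm m j, pow_add]
  ring

theorem sum_range_mul_pow_eq_pow_mul (hb : ∀ n < j, b n = 0) (K : ℕ) (z : ℂ) :
    ∑ n ∈ range K, b n * z ^ n = z ^ j * ∑ m ∈ range (K - j), b (j + m) * z ^ m := by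
  rcases le_total K j with hK | hK
  · rw [Nat.sub_eq_zero_of_le hK, sum_range_zero, mul_zero]
    exact sum_eq_zero fun n hn => by rw [hb n ((mem_range.1 hn).trans_le hK), zero_mul]
  obtain ⟨N, rfl⟩ := Nat.exists_eq_add_of_le hK
  rw [sum_range_add, sum_eq_zero fun n hn => by rw [hb n (mem_range.1 hn), zero_mul], zero_add,
    Nat.add_sub_cancel_left, mul_sum]
  exact sum_congr rfl fun m _ => by ring

theorem norm_coeff_le_one_of_norm_le_pow
    (hf : ∀ w : ℂ, ‖w‖ < 1 → HasSum (fun n => b n * w ^ n) (f w))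
    (hfj : ∀ w : ℂ, ‖w‖ < 1 → ‖f w‖ ≤ ‖w‖ ^ j) : ‖b j‖ ≤ 1 := by
  have h := norm_coeff_mul_pow_le_pow hf hfj (r := 1 / 2) (by norm_num) (by norm_num) j
  exact le_of_mul_le_mul_right (by rwa [one_mul]) (by positivity : (0 : ℝ) < (1 / 2) ^ j)

theorem norm_sum_range_mul_pow_le_pow
    (hf : ∀ w : ℂ, ‖w‖ < 1 → HasSum (fun n => b n * w ^ n) (f w))
    (hfj : ∀ w : ℂ, ‖w‖ < 1 → ‖f w‖ ≤ ‖w‖ ^ j) (K : ℕ) {z : ℂ} (hz : ‖z‖ ≤ 1 / 2) :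
    ‖∑ n ∈ range K, b n * z ^ n‖ ≤ ‖z‖ ^ j := by
  have hb : ∀ n < j, b n = 0 := fun n hn => coeff_eq_zero_of_norm_le_pow hf hfj hn
  set g : ℂ → ℂ := fun w => ∑' m, b (j + m) * w ^ m
  have hg : ∀ w : ℂ, ‖w‖ < 1 → HasSum (fun m => b (j + m) * w ^ m) (g w) := fun w hw => by
    rcases eq_or_ne w 0 with rfl | hw0
    · exact (hasSum_single 0 fun m hm => by simp [hm]).summable.hasSum
    · exact ((summable_mul_left_iff (pow_ne_zero j hw0)).1
        (hasSum_pow_mul_coeff_shift hb (hf w hw)).summable).hasSum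
  have hg_le : ∀ w : ℂ, ‖w‖ < 1 → ‖g w‖ ≤ 1 := fun w hw => by
    rcases eq_or_ne w 0 with rfl | hw0
    · rw [(hg 0 hw).unique (hasSum_single 0 fun m hm => by simp [hm])]
      simpa using norm_coeff_le_one_of_norm_le_pow hf hfj
    · have hfw := (hasSum_pow_mul_coeff_shift hb (hf w hw)).unique ((hg w hw).mul_left (w ^ j))
      have h := hfj w hw
      rw [hfw, norm_mul, norm_pow] at h
      exact le_of_mul_le_mul_left (by simpa using h) (pow_pos (norm_pos_iff.2 hw0) j)
  rw [sum_range_mul_pow_eq_pow_mul hb, norm_mul, norm_pow]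
  exact mul_le_of_le_one_right (by positivity) (norm_sum_range_mul_pow_le hg hg_le _ hz)

end PowerSeriesOnUnitDisc

theorem rogosinski_schwarz_pow_general (φ : ℂ → ℂ) (j : ℕ) (c : ℕ → ℂ)
    (hφ : ∀ z : ℂ, ‖z‖ < 1 → HasSum (fun n => c n * z ^ n) (φ z ^ j))
    (h0 : φ 0 = 0)
    (hb : ∀ z : ℂ, ‖z‖ < 1 → ‖φ z‖ ≤ 1)
    (hanalytic : AnalyticOnNhd ℂ φ (Metric.ball (0 : ℂ) 1))
    (k : ℕ) (z : ℂ) (hz : ‖z‖ ≤ 1 / 2) :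
    ‖∑ n ∈ Finset.range (k + 1), c n * z ^ n‖ ≤ ‖z‖ ^ j := by
  have hschwarz : ∀ w : ℂ, ‖w‖ < 1 → ‖φ w‖ ≤ ‖w‖ := fun w hw =>
    Complex.norm_le_norm_of_mapsTo_ball hanalytic.differentiableOn
      (fun v hv => mem_closedBall_zero_iff.2 (hb v (mem_ball_zero_iff.1 hv))) h0 hw
  refine norm_sum_range_mul_pow_le_pow hφ (fun w hw => ?_) (k + 1) hz
  rw [norm_pow]
  exact pow_le_pow_left₀ (norm_nonneg _) (hschwarz w hw) j

/-- Sections of powers of a Schwarz function: if `φ^j(z) = Σ cₙ zⁿ`, then each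
section satisfies `|s_k(z; φ^j)| ≤ |z|^j` for `|z| ≤ 1/2`. -/
theorem rogosinski_schwarz_pow (φ : ℂ → ℂ) (j : ℕ) (hj : 1 ≤ j) (c : ℕ → ℂ)
    (hφ : ∀ z : ℂ, ‖z‖ < 1 → HasSum (fun n => c n * z ^ n) (φ z ^ j))
    (h0 : φ 0 = 0)
    (hb : ∀ z : ℂ, ‖z‖ < 1 → ‖φ z‖ ≤ 1)
    (hanalytic : AnalyticOnNhd ℂ φ (Metric.ball (0 : ℂ) 1))
    (k : ℕ) (z : ℂ) (hz : ‖z‖ ≤ 1 / 2) :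
    ‖∑ n ∈ Finset.range (k + 1), c n * z ^ n‖ ≤ ‖z‖ ^ j :=
  rogosinski_schwarz_pow_general φ j c hφ h0 hb hanalytic k z hz
end
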